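/- arXiv:2404.03860 — 6 statements merged into one kernel-verified Lean document; each statement's English description precedes it below -/
import Mathlib

section
/- Let p be hyperbolic along e and suppose p = q·r as polynomials, where q is a factor of p scaled so that q(e) > 0. Then q is hyperbolic along e and Λ₊(p,e) ⊆ Λ₊(q,e). -/
/-- The univariate polynomial `t ↦ p(x - t·e)`. -/
noncomputable def lineNeg {n : ℕ} (p : MvPolynomial (Fin n) ℝ) (x e : Fin n → ℝ) :
    Polynomial ℝ :=
  MvPolynomial.eval₂ Polynomial.C
    (fun i => Polynomial.C (x i) - Polynomial.X * Polynomial.C (e i)) p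

/-- The univariate polynomial `t ↦ p(t·e - x)`. -/
noncomputable def linePos {n : ℕ} (p : MvPolynomial (Fin n) ℝ) (x e : Fin n → ℝ) :
    Polynomial ℝ :=
  MvPolynomial.eval₂ Polynomial.C
    (fun i => Polynomial.X * Polynomial.C (e i) - Polynomial.C (x i)) p

/-- `p` is hyperbolic along `e`: `p(e) > 0` and for every `x` the univariate polynomial
`t ↦ p(x - t·e)` has only real roots (its number of real roots, counted with multiplicity,
equals its degree). -/
def IsHyperbolicAlong {n : ℕ} (p : MvPolynomial (Fin n) ℝ) (e : Fin n → ℝ) : Prop :=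
  0 < MvPolynomial.eval e p ∧
    ∀ x : Fin n → ℝ, (lineNeg p x e).roots.card = (lineNeg p x e).natDegree

/-- The hyperbolicity cone `Λ₊(p,e)`: the set of `x` such that all roots of
`t ↦ p(t·e - x)` are nonnegative. -/
def hypCone {n : ℕ} (p : MvPolynomial (Fin n) ℝ) (e : Fin n → ℝ) : Set (Fin n → ℝ) :=
  {x | ∀ t ∈ (linePos p x e).roots, 0 ≤ t}



section Aux

open Polynomial

lemma eval_scale {n d : ℕ} {p : MvPolynomial (Fin n) ℝ} (hp : p.IsHomogeneous d)
    (c : ℝ) (x : Fin n → ℝ) :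
    MvPolynomial.eval (fun i => c * x i) p = c ^ d * MvPolynomial.eval x p := by
  rw [MvPolynomial.eval_eq, MvPolynomial.eval_eq, Finset.mul_sum]
  refine Finset.sum_congr rfl fun s hs => ?_
  have hd : (∑ i ∈ s.support, s i) = d := by
    have h1 := hp (MvPolynomial.mem_support_iff.mp hs)
    simpa [Finsupp.weight_apply, Finsupp.sum] using h1
  calc MvPolynomial.coeff s p * ∏ i ∈ s.support, (c * x i) ^ s i
      = MvPolynomial.coeff s p * ((∏ i ∈ s.support, c ^ s i) *
          ∏ i ∈ s.support, x i ^ s i) := by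
        rw [← Finset.prod_mul_distrib]; simp [mul_pow]
    _ = c ^ d * (MvPolynomial.coeff s p * ∏ i ∈ s.support, x i ^ s i) := by
        rw [Finset.prod_pow_eq_pow_sum, hd]; ring

lemma eval_lineNeg {n : ℕ} (p : MvPolynomial (Fin n) ℝ) (x e : Fin n → ℝ) (t : ℝ) :
    (lineNeg p x e).eval t = MvPolynomial.eval (fun i => x i - t * e i) p := by
  unfold lineNeg
  rw [show (Polynomial.eval t : Polynomial ℝ → ℝ) = (Polynomial.evalRingHom t : Polynomial ℝ →+* ℝ) from rfl,
    MvPolynomial.eval₂_comp_left (Polynomial.evalRingHom t)]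
  have h1 : (Polynomial.evalRingHom t).comp Polynomial.C = RingHom.id ℝ := by
    ext a; simp
  rw [h1]
  rw [← MvPolynomial.eval₂_id]
  congr 1
  funext i
  simp [Function.comp]
  ring

lemma eval_linePos {n : ℕ} (p : MvPolynomial (Fin n) ℝ) (x e : Fin n → ℝ) (t : ℝ) :
    (linePos p x e).eval t = MvPolynomial.eval (fun i => t * e i - x i) p := by
  unfold linePos
  rw [show (Polynomial.eval t : Polynomial ℝ → ℝ) = (Polynomial.evalRingHom t : Polynomial ℝ →+* ℝ) from rfl,
    MvPolynomial.eval₂_comp_left (Polynomial.evalRingHom t)]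
  have h1 : (Polynomial.evalRingHom t).comp Polynomial.C = RingHom.id ℝ := by
    ext a; simp
  rw [h1]
  rw [← MvPolynomial.eval₂_id]
  congr 1
  funext i
  simp [Function.comp]
  ring

lemma vanish_aux {g : Polynomial ℝ} (h : ∀ t : ℝ, t ≠ 0 → g.eval t = 0)
    (h0 : g.eval 0 ≠ 0) : False := by
  have hg : g = 0 := by
    apply Polynomial.eq_zero_of_infinite_isRoot
    apply Set.Infinite.mono (s := {(0:ℝ)}ᶜ)
    · intro t ht
      exact h t ht
    · exact (Set.finite_singleton 0).infinite_compl
  rw [hg] at h0; simp at h0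

lemma lineNeg_ne_zero {n d : ℕ} {p : MvPolynomial (Fin n) ℝ} {e : Fin n → ℝ}
    (hp : p.IsHomogeneous d) (hpe : MvPolynomial.eval e p ≠ 0) (x : Fin n → ℝ) :
    lineNeg p x e ≠ 0 := by
  intro h
  refine vanish_aux (g := lineNeg p (fun i => -e i) (fun i => -x i)) (fun t ht => ?_) ?_
  · rw [eval_lineNeg]
    have : (fun i => -e i - t * -x i) = (fun i => t * (x i - (1/t) * e i)) := by
      funext i; field_simp; ring
    rw [this, eval_scale hp]
    rw [← eval_lineNeg p x e (1/t), h]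
    simp
  · rw [eval_lineNeg]
    have : (fun i => -e i - 0 * -x i) = (fun i => (-1 : ℝ) * e i) := by
      funext i; ring
    rw [this, eval_scale hp]
    simpa using fun hc => hpe hc

lemma linePos_ne_zero {n d : ℕ} {p : MvPolynomial (Fin n) ℝ} {e : Fin n → ℝ}
    (hp : p.IsHomogeneous d) (hpe : MvPolynomial.eval e p ≠ 0) (x : Fin n → ℝ) :
    linePos p x e ≠ 0 := by
  intro h
  refine vanish_aux (g := lineNeg p e x) (fun t ht => ?_) ?_
  · rw [eval_lineNeg]
    have : (fun i => e i - t * x i) = (fun i => t * ((1/t) * e i - x i)) := by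
      funext i; field_simp
    rw [this, eval_scale hp]
    rw [← eval_linePos p x e (1/t), h]
    simp
  · rw [eval_lineNeg]
    simpa using hpe

lemma lineNeg_mul {n : ℕ} (q r : MvPolynomial (Fin n) ℝ) (x e : Fin n → ℝ) :
    lineNeg (q * r) x e = lineNeg q x e * lineNeg r x e := by
  unfold lineNeg; rw [MvPolynomial.eval₂_mul]

lemma linePos_mul {n : ℕ} (q r : MvPolynomial (Fin n) ℝ) (x e : Fin n → ℝ) :
    linePos (q * r) x e = linePos q x e * linePos r x e := by
  unfold linePos; rw [MvPolynomial.eval₂_mul]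

end Aux

theorem stmt_2 {n d d₁ d₂ : ℕ} (p q r : MvPolynomial (Fin n) ℝ) (e : Fin n → ℝ)
    (hp : p.IsHomogeneous d) (hq : q.IsHomogeneous d₁) (hr : r.IsHomogeneous d₂)
    (hfact : p = q * r) (hyp : IsHyperbolicAlong p e)
    (hqe : 0 < MvPolynomial.eval e q) :
    IsHyperbolicAlong q e ∧ hypCone p e ⊆ hypCone q e :=  by
  have hpe : MvPolynomial.eval e p ≠ 0 := ne_of_gt hyp.1
  have hre : MvPolynomial.eval e r ≠ 0 := by
    intro h
    apply hpe
    rw [hfact]; simp [h]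
  have hqe' : MvPolynomial.eval e q ≠ 0 := ne_of_gt hqe
  constructor
  · refine ⟨hqe, fun x => ?_⟩
    have hfq := lineNeg_ne_zero hq hqe' x
    have hfr := lineNeg_ne_zero hr hre x
    have hmul : lineNeg p x e = lineNeg q x e * lineNeg r x e := by
      rw [hfact, lineNeg_mul]
    have hcard := (hyp.2 x)
    rw [hmul, Polynomial.roots_mul (mul_ne_zero hfq hfr),
      Polynomial.natDegree_mul hfq hfr, Multiset.card_add] at hcard
    have h1 := Polynomial.card_roots' (lineNeg q x e)
    have h2 := Polynomial.card_roots' (lineNeg r x e)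
    omega
  · intro x hx t ht
    apply hx
    have hmul : linePos p x e = linePos q x e * linePos r x e := by
      rw [hfact, linePos_mul]
    have hne : linePos p x e ≠ 0 := linePos_ne_zero hp hpe x
    rw [hmul] at hne ⊢
    rw [Polynomial.roots_mul hne, Multiset.mem_add]
    exact Or.inl ht
end

section
/- Let G be a graph on vertices {1,…,n} and suppose vertex 1 belongs to at least two distinct maximal cliques of G. Let E be the n×n matrix with 1 in entry (1,1) and 0 elsewhere. Then E generates an extreme ray of the cone S*(G) = {A ∈ S(G) : A_C ⪰ 0 for all cliques C of G}; that is, whenever X, Y ∈ S*(G) satisfy X + Y = αE with α ≥ 0, both X and Y are nonnegative multiples of E. -/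
/-- The principal submatrix of `A` indexed by a finite set `C` of vertices. -/
def sub {n : ℕ} (A : Matrix (Fin n) (Fin n) ℝ) (C : Finset (Fin n)) :
    Matrix C C ℝ :=
  A.submatrix (fun i : C => (i : Fin n)) (fun j : C => (j : Fin n))

/-- Membership in the cone `S*(G)`: a symmetric matrix supported on `G` all of whose
clique-indexed principal submatrices are positive semidefinite. -/
def MemSStar {n : ℕ} (G : SimpleGraph (Fin n)) (A : Matrix (Fin n) (Fin n) ℝ) : Prop :=
  A.IsSymm ∧ (∀ i j : Fin n, i ≠ j → ¬ G.Adj i j → A i j = 0) ∧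
    ∀ C : Finset (Fin n), G.IsClique (↑C : Set (Fin n)) → (sub A C).PosSemidef

/-- A maximal clique of a graph. -/
def IsMaxClique {V : Type*} (G : SimpleGraph V) (s : Finset V) : Prop :=
  G.IsClique (↑s : Set V) ∧ ∀ t : Finset V, G.IsClique (↑t : Set V) → s ⊆ t → s = t

/-!
The diagonal entries of a matrix in `S*(G)` are nonnegative (its `1 × 1` clique blocks are
positive semidefinite), so `X + Y = α E₁₁` forces `X` and `Y` to vanish on the diagonal away
from vertex `1`. A positive semidefinite block with a zero diagonal entry has a zero row and
column there; applied to the blocks on edges `{i, j}` this kills every entry of `X` and `Y`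
outside position `(1, 1)`.
-/

open scoped ComplexOrder

theorem Matrix.PosSemidef.apply_eq_zero_of_diag_eq_zero {𝕜 m : Type*} [RCLike 𝕜] [Fintype m]
    [DecidableEq m] {M : Matrix m m 𝕜} (hM : M.PosSemidef) {j : m} (hj : M j j = 0) (i : m) :
    M i j = 0 := by
  have hquad : dotProduct (star (Pi.single j 1 : m → 𝕜)) (M.mulVec (Pi.single j 1)) = 0 := by
    simpa [Matrix.mulVec_single] using hj
  simpa [Matrix.mulVec_single] using
    congrFun ((hM.dotProduct_mulVec_zero_iff _).mp hquad) i

namespace MemSStar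

variable {n : ℕ} {G : SimpleGraph (Fin n)} {A : Matrix (Fin n) (Fin n) ℝ}

theorem diag_nonneg (hA : MemSStar G A) (i : Fin n) : 0 ≤ A i i := by
  have hpsd := hA.2.2 {i} (by simp)
  simpa [sub] using hpsd.diag_nonneg (i := ⟨i, Finset.mem_singleton_self i⟩)

theorem apply_eq_zero_of_diag_eq_zero (hA : MemSStar G A) {j : Fin n} (hj : A j j = 0)
    (i : Fin n) : A i j = 0 := by
  by_cases hij : i = j
  · rwa [hij]
  by_cases hadj : G.Adj i j
  · have hpsd := hA.2.2 {i, j} (by simpa using SimpleGraph.isClique_pair.mpr fun _ => hadj)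
    simpa [sub] using hpsd.apply_eq_zero_of_diag_eq_zero
      (j := ⟨j, by simp⟩) (by simpa [sub] using hj) ⟨i, by simp⟩
  · exact hA.2.1 i j hij hadj

theorem eq_smul_single_of_diag_eq_zero (hA : MemSStar G A) (v : Fin n)
    (hdiag : ∀ i, i ≠ v → A i i = 0) : A = A v v • Matrix.single v v 1 := by
  ext i j
  by_cases hj : j = v
  · by_cases hi : i = v
    · simp [hi, hj]
    · rw [hA.1.apply j i, hA.apply_eq_zero_of_diag_eq_zero (hdiag i hi),
        Matrix.smul_apply, Matrix.single_apply_of_row_ne (Ne.symm hi), smul_zero]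
  · rw [hA.apply_eq_zero_of_diag_eq_zero (hdiag j hj), Matrix.smul_apply,
      Matrix.single_apply_of_col_ne _ _ (Ne.symm hj), smul_zero]

theorem diag_eq_zero_of_add_eq_smul_single {B : Matrix (Fin n) (Fin n) ℝ} (hA : MemSStar G A)
    (hB : MemSStar G B) {v : Fin n} {α : ℝ} (hsum : A + B = α • Matrix.single v v 1) {i : Fin n}
    (hi : i ≠ v) : A i i = 0 := by
  have hdiag : A i i + B i i = 0 := by simpa [Matrix.single_apply_of_row_ne (Ne.symm hi)] using congrFun (congrFun hsum i) i
  linarith [hA.diag_nonneg i, hB.diag_nonneg i]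

theorem eq_smul_single_of_add_eq_smul_single {B : Matrix (Fin n) (Fin n) ℝ} (hA : MemSStar G A)
    (hB : MemSStar G B) {v : Fin n} {α : ℝ} (hsum : A + B = α • Matrix.single v v 1) :
    ∃ β : ℝ, 0 ≤ β ∧ A = β • Matrix.single v v 1 :=
  ⟨A v v, hA.diag_nonneg v, hA.eq_smul_single_of_diag_eq_zero v fun _ hi =>
    hA.diag_eq_zero_of_add_eq_smul_single hB hsum hi⟩

end MemSStar

theorem stmt_9_general {n : ℕ} (hn : 0 < n) (G : SimpleGraph (Fin n))
    (E : Matrix (Fin n) (Fin n) ℝ)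
    (hE : E = Matrix.single (⟨0, hn⟩ : Fin n) (⟨0, hn⟩ : Fin n) (1 : ℝ)) :
    ∀ X Y : Matrix (Fin n) (Fin n) ℝ, MemSStar G X → MemSStar G Y →
      ∀ α : ℝ, 0 ≤ α → X + Y = α • E →
        (∃ β : ℝ, 0 ≤ β ∧ X = β • E) ∧ (∃ γ : ℝ, 0 ≤ γ ∧ Y = γ • E) := by
  intro X Y hX hY α _ hsum
  subst hE
  exact ⟨hX.eq_smul_single_of_add_eq_smul_single hY hsum,
    hY.eq_smul_single_of_add_eq_smul_single hX (by rwa [add_comm])⟩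

/-- If the first vertex lies in two distinct maximal cliques, the matrix unit `E₁₁`
generates an extreme ray of `S*(G)`. -/
theorem stmt_9 {n : ℕ} (hn : 0 < n) (G : SimpleGraph (Fin n))
    (C₁ C₂ : Finset (Fin n)) (h₁ : IsMaxClique G C₁) (h₂ : IsMaxClique G C₂)
    (hne : C₁ ≠ C₂) (hv₁ : (⟨0, hn⟩ : Fin n) ∈ C₁) (hv₂ : (⟨0, hn⟩ : Fin n) ∈ C₂)
    (E : Matrix (Fin n) (Fin n) ℝ)
    (hE : E = Matrix.single (⟨0, hn⟩ : Fin n) (⟨0, hn⟩ : Fin n) (1 : ℝ)) :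
    ∀ X Y : Matrix (Fin n) (Fin n) ℝ, MemSStar G X → MemSStar G Y →
      ∀ α : ℝ, 0 ≤ α → X + Y = α • E →
        (∃ β : ℝ, 0 ≤ β ∧ X = β • E) ∧ (∃ γ : ℝ, 0 ≤ γ ∧ Y = γ • E) :=
  stmt_9_general hn G E hE
end

section
/- For each n ≥ 3, let G_n be the graph consisting of a clique K on ⌊(n−1)/2⌋ vertices together with ⌈(n+1)/2⌉ additional vertices, each adjacent to every vertex of K and to nothing else. Then G_n is chordal, has n vertices, and has exactly ⌈(n+1)/2⌉ maximal cliques, each of size ⌊(n+1)/2⌋. Consequently the sum of the sizes of the maximal cliques of G_n equals (n+1)²/4 if n is odd and ((n+1)²−1)/4 if n is even. -/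
/-- A graph is chordal if every (injectively embedded) cycle of length at least 4 has a
chord, i.e. two non-consecutive vertices of the cycle are adjacent. -/
def IsChordal {V : Type*} (G : SimpleGraph V) : Prop :=
  ∀ m : ℕ, 4 ≤ m → ∀ f : ZMod m → V, Function.Injective f →
    (∀ i, G.Adj (f i) (f (i + 1))) →
    ∃ i j : ZMod m, i ≠ j ∧ j ≠ i + 1 ∧ i ≠ j + 1 ∧ G.Adj (f i) (f j)

/-!
Every vertex of the clique `K` is adjacent to all other vertices, and every edge meets `K`, so a
cycle of length at least 4 through a vertex of `K` has a chord from that vertex to the one two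
steps further on. A clique has at most one vertex outside `K`, and a maximal one contains `K`;
hence the maximal cliques are exactly the sets `insert v K` with `v ∉ K`, and all counts follow
from `#K = ⌊(n - 1)/2⌋`.
-/

lemma ZMod.natCast_ne_zero_of_pos_of_lt {m c : ℕ} (h0 : 0 < c) (h : c < m) :
    (c : ZMod m) ≠ 0 := by
  rw [Ne, ZMod.natCast_eq_zero_iff]
  exact Nat.not_dvd_of_pos_of_lt h0 h

lemma exists_chord_of_forall_adj {V : Type*} {G : SimpleGraph V} {m : ℕ} (hm : 4 ≤ m)
    {f : ZMod m → V} (hf : Function.Injective f) (i : ZMod m)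
    (hi : ∀ w, w ≠ f i → G.Adj (f i) w) :
    ∃ i j : ZMod m, i ≠ j ∧ j ≠ i + 1 ∧ i ≠ j + 1 ∧ G.Adj (f i) (f j) := by
  have h1 : (1 : ZMod m) ≠ 0 := by
    exact_mod_cast ZMod.natCast_ne_zero_of_pos_of_lt one_pos (by omega)
  have h2 : (2 : ZMod m) ≠ 0 := by
    exact_mod_cast ZMod.natCast_ne_zero_of_pos_of_lt two_pos (by omega)
  have h3 : (3 : ZMod m) ≠ 0 := by
    exact_mod_cast ZMod.natCast_ne_zero_of_pos_of_lt three_pos (by omega)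
  refine ⟨i, i + 2, fun h => h2 (by linear_combination -h), fun h => h1 (by linear_combination h),
    fun h => h3 (by linear_combination -h), hi _ fun h => h2 ?_⟩
  linear_combination hf h

namespace SimpleGraph

variable {V : Type*}

def completeSplit (K : Finset V) : SimpleGraph V :=
  fromRel fun u v => u ∈ K ∨ v ∈ K

variable {K : Finset V}

@[simp]
lemma completeSplit_adj {u v : V} :
    (completeSplit K).Adj u v ↔ u ≠ v ∧ (u ∈ K ∨ v ∈ K) := by
  simp only [completeSplit, fromRel_adj, or_comm (a := v ∈ K), or_self]

lemma isChordal_completeSplit : IsChordal (completeSplit K) := by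
  intro m hm f hf hcyc
  have hK : ∀ i, f i ∈ K → ∀ w, w ≠ f i → (completeSplit K).Adj (f i) w :=
    fun i hi w hw => completeSplit_adj.2 ⟨Ne.symm hw, .inl hi⟩
  obtain ⟨-, h0 | h1⟩ := completeSplit_adj.1 (hcyc 0)
  · exact exists_chord_of_forall_adj hm hf 0 (hK 0 h0)
  · exact exists_chord_of_forall_adj hm hf (0 + 1) (hK _ h1)

variable [DecidableEq V]

lemma isClique_completeSplit_iff {s : Finset V} :
    (completeSplit K).IsClique (s : Set V) ↔ (s \ K).card ≤ 1 := by
  simp only [Finset.card_le_one, Finset.mem_sdiff]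
  constructor
  · rintro hs a ⟨ha, haK⟩ b ⟨hb, hbK⟩
    by_contra hab
    simpa [haK, hbK] using hs ha hb hab
  · intro hs a ha b hb hab
    refine completeSplit_adj.2 ⟨hab, ?_⟩
    by_contra! h
    exact hab (hs a ⟨ha, h.1⟩ b ⟨hb, h.2⟩)

lemma isClique_completeSplit_insert (v : V) :
    (completeSplit K).IsClique (insert v K : Finset V) :=
  isClique_completeSplit_iff.2 <| Finset.card_le_one.2 fun a ha b hb => by
    simp only [Finset.mem_sdiff, Finset.mem_insert] at ha hb
    grind

lemma subset_insert_of_isClique_completeSplit {s : Finset V} {v : V}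
    (hs : (completeSplit K).IsClique (s : Set V)) (hvs : v ∈ s) (hvK : v ∉ K) :
    s ⊆ insert v K := fun a ha => by
  by_cases haK : a ∈ K
  · exact Finset.mem_insert_of_mem haK
  · rw [Finset.card_le_one.1 (isClique_completeSplit_iff.1 hs) a (by simp [ha, haK]) v
      (by simp [hvs, hvK])]
    exact Finset.mem_insert_self v K

lemma isMaxClique_completeSplit_iff (hK : ∃ v, v ∉ K) {s : Finset V} :
    IsMaxClique (completeSplit K) s ↔ ∃ v ∉ K, s = insert v K := by
  constructor
  · rintro ⟨hs, hmax⟩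
    have hKs : K ⊆ s := by
      refine (hmax (s ∪ K) ?_ Finset.subset_union_left).symm ▸ Finset.subset_union_right
      rwa [isClique_completeSplit_iff, Finset.union_sdiff_right, ← isClique_completeSplit_iff]
    obtain ⟨v, hvs, hvK⟩ : ∃ v ∈ s, v ∉ K := by
      by_contra! hsK
      obtain ⟨u, huK⟩ := hK
      have := hmax _ (isClique_completeSplit_insert u)
        (Finset.Subset.trans hsK (Finset.subset_insert u K))
      exact huK (hsK u (this ▸ Finset.mem_insert_self u K))
    exact ⟨v, hvK, (subset_insert_of_isClique_completeSplit hs hvs hvK).antisymm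
      (Finset.insert_subset hvs hKs)⟩
  · rintro ⟨v, hvK, rfl⟩
    exact ⟨isClique_completeSplit_insert v, fun t ht hst =>
      hst.antisymm <| subset_insert_of_isClique_completeSplit ht
        (hst (Finset.mem_insert_self v K)) hvK⟩


lemma card_of_isMaxClique_completeSplit (hK : ∃ v, v ∉ K) {s : Finset V}
    (hs : IsMaxClique (completeSplit K) s) : s.card = K.card + 1 := by
  obtain ⟨v, hvK, rfl⟩ := (isMaxClique_completeSplit_iff hK).1 hs
  exact Finset.card_insert_of_notMem hvK

variable [Fintype V]

open scoped Classical in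
lemma filter_isMaxClique_completeSplit (hK : ∃ v, v ∉ K) :
    Finset.univ.filter (IsMaxClique (completeSplit K)) = Kᶜ.image (insert · K) := by
  ext s
  simp [isMaxClique_completeSplit_iff hK, eq_comm]

open scoped Classical in
lemma card_filter_isMaxClique_completeSplit (hK : ∃ v, v ∉ K) :
    (Finset.univ.filter (IsMaxClique (completeSplit K))).card = Fintype.card V - K.card := by
  rw [filter_isMaxClique_completeSplit hK, Finset.card_image_of_injOn (Finset.insert_inj_on' K),
    Finset.card_compl]

open scoped Classical in
lemma sum_card_isMaxClique_completeSplit (hK : ∃ v, v ∉ K) :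
    ∑ s ∈ Finset.univ.filter (IsMaxClique (completeSplit K)), s.card
      = (Fintype.card V - K.card) * (K.card + 1) := by
  rw [Finset.sum_congr rfl fun s hs =>
      card_of_isMaxClique_completeSplit hK (Finset.mem_filter.1 hs).2,
    Finset.sum_const, smul_eq_mul, card_filter_isMaxClique_completeSplit hK]

end SimpleGraph

open scoped Classical in
/-- The graph `G_n` on `n ≥ 3` vertices: a clique `K` on the `⌊(n-1)/2⌋` first vertices,
plus `⌈(n+1)/2⌉` further vertices each adjacent exactly to all of `K`.  It is chordal, has
`n` vertices, and exactly `⌈(n+1)/2⌉` maximal cliques, each of size `⌊(n+1)/2⌋`; the sum of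
the sizes of its maximal cliques is `(n+1)²/4` for odd `n` and `((n+1)²-1)/4` for even `n`. -/
theorem stmt_12 (n : ℕ) (hn : 3 ≤ n)
    (G : SimpleGraph (Fin n))
    (hG : G = SimpleGraph.fromRel (fun i j : Fin n => i.val < (n - 1) / 2 ∨ j.val < (n - 1) / 2)) :
    IsChordal G ∧ Fintype.card (Fin n) = n ∧
    (Finset.univ.filter (fun s : Finset (Fin n) => IsMaxClique G s)).card = (n + 2) / 2 ∧
    (∀ s : Finset (Fin n), IsMaxClique G s → s.card = (n + 1) / 2) ∧
    (Odd n →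
      (∑ s ∈ Finset.univ.filter (fun s : Finset (Fin n) => IsMaxClique G s), s.card) * 4
        = (n + 1) ^ 2) ∧
    (Even n →
      (∑ s ∈ Finset.univ.filter (fun s : Finset (Fin n) => IsMaxClique G s), s.card) * 4
        = (n + 1) ^ 2 - 1) := by
  set K : Finset (Fin n) := {i | i.val < (n - 1) / 2}
  have hG : G = SimpleGraph.completeSplit K := by
    subst hG
    ext i j
    simp [K, SimpleGraph.completeSplit]
  have hK : ∃ v, v ∉ K := ⟨⟨n - 1, by omega⟩, by simp [K]; omega⟩
  have hKcard : K.card = (n - 1) / 2 := by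
    rw [Fin.card_filter_val_lt]; omega
  subst hG
  refine ⟨SimpleGraph.isChordal_completeSplit, Fintype.card_fin n, ?_, fun s hs => ?_, ?_, ?_⟩
  · rw [SimpleGraph.card_filter_isMaxClique_completeSplit hK, Fintype.card_fin]; omega
  · rw [SimpleGraph.card_of_isMaxClique_completeSplit hK hs]; omega
  · rintro ⟨m, rfl⟩
    rw [SimpleGraph.sum_card_isMaxClique_completeSplit hK, hKcard, Fintype.card_fin,
      show (2 * m + 1 - 1) / 2 = m by omega, show 2 * m + 1 - m = m + 1 by omega]
    ring
  · rintro ⟨m, rfl⟩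
    rw [SimpleGraph.sum_card_isMaxClique_completeSplit hK, hKcard, Fintype.card_fin]
    obtain ⟨m, rfl⟩ : ∃ l, m = l + 1 := ⟨m - 1, by omega⟩
    rw [show (m + 1 + (m + 1) - 1) / 2 = m by omega, show m + 1 + (m + 1) - m = m + 2 by omega]
    ring_nf
    omega
end

section
/- Let T be a rooted forest (a directed acyclic graph whose components are trees with edges oriented away from the root) on n nodes. Then the sum, over all maximal directed paths from a root, of the number of nodes in the path is at most ⌈(n+1)/2⌉·⌊(n+1)/2⌋. In particular, if there are k+1 maximal root-to-leaf paths, each path has at most n−k nodes, and the total is at most (k+1)(n−k) ≤ ⌈(n+1)/2⌉·⌊(n+1)/2⌋. -/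
lemma key_ineq (a b c d : ℕ) (h1 : a ≤ c) (h4 : c ≤ d) (h2 : d ≤ b)
    (h3 : c + d = a + b) : a * b ≤ d * c := by nlinarith

lemma amgm_aux (a b : ℕ) : a * b ≤ ((a + b + 1) / 2) * ((a + b) / 2) := by
  rcases le_total a b with h | h
  · exact key_ineq a b _ _ (by omega) (by omega) (by omega) (by omega)
  · calc a * b = b * a := mul_comm a b
    _ ≤ ((a+b+1)/2) * ((a+b)/2) :=
        key_ineq b a ((a+b)/2) ((a+b+1)/2) (by omega) (by omega) (by omega) (by omega)

open scoped Classical in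
/-- For a rooted forest on `n` nodes (given by a parent map `par` whose parent relation is
well-founded, i.e. there are no cycles), the sum over all leaves of the number of nodes of
the maximal directed root-to-leaf path ending there (the number of ancestors of the leaf,
the leaf included) is at most `⌈(n+1)/2⌉·⌊(n+1)/2⌋`.  Moreover if there are `k+1` maximal
paths then each has at most `n-k` nodes, and `(k+1)(n-k) ≤ ⌈(n+1)/2⌉·⌊(n+1)/2⌋`. -/
theorem stmt_13 {V : Type*} [Fintype V] [DecidableEq V] {n : ℕ}
    (hcard : Fintype.card V = n) (par : V → Option V)
    (hwf : WellFounded (fun a b : V => par b = some a)) :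
    (∑ ℓ ∈ Finset.univ.filter (fun v : V => ¬ ∃ w : V, par w = some v),
        {u : V | Relation.ReflTransGen (fun a b : V => par b = some a) u ℓ}.ncard)
      ≤ ((n + 2) / 2) * ((n + 1) / 2) ∧
    (∀ k : ℕ,
      (Finset.univ.filter (fun v : V => ¬ ∃ w : V, par w = some v)).card = k + 1 →
      ∀ ℓ : V, (¬ ∃ w : V, par w = some ℓ) →
        {u : V | Relation.ReflTransGen (fun a b : V => par b = some a) u ℓ}.ncard ≤ n - k) ∧
    (∀ k : ℕ, 1 ≤ k → k ≤ n - 1 →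
      (k + 1) * (n - k) ≤ ((n + 2) / 2) * ((n + 1) / 2)) := by
  set L : Finset V := Finset.univ.filter (fun v : V => ¬ ∃ w : V, par w = some v) with hL
  have hmemL : ∀ v : V, v ∈ L ↔ ¬ ∃ w : V, par w = some v := by
    intro v; simp [hL]
  -- each leaf's ancestor set contains no other leaf
  have hsub : ∀ ℓ ∈ L,
      {u : V | Relation.ReflTransGen (fun a b : V => par b = some a) u ℓ}
        ⊆ ↑(Finset.univ \ L.erase ℓ) := by
    intro ℓ hℓ u hu
    simp only [Finset.coe_sdiff, Finset.coe_univ, Set.mem_diff, Set.mem_univ, true_and,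
      Finset.coe_erase, Set.mem_diff, Finset.mem_coe, Set.mem_singleton_iff]
    intro ⟨huL, hune⟩
    rcases (Relation.ReflTransGen.cases_head hu) with heq | ⟨c, hc, _⟩
    · exact hune heq
    · exact ((hmemL u).1 huL) ⟨c, hc⟩
  have hLn : L.card ≤ n := by
    rw [← hcard]; exact le_trans (Finset.card_le_univ L) (le_of_eq (Finset.card_univ))
  have hbound : ∀ ℓ ∈ L,
      {u : V | Relation.ReflTransGen (fun a b : V => par b = some a) u ℓ}.ncard
        ≤ n - (L.card - 1) := by
    intro ℓ hℓ
    have h1 := Set.ncard_le_ncard (hsub ℓ hℓ) (Set.toFinite _)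
    rw [Set.ncard_coe_finset] at h1
    refine le_trans h1 ?_
    rw [Finset.card_sdiff_of_subset (Finset.subset_univ _), Finset.card_erase_of_mem hℓ,
      Finset.card_univ, hcard]
  refine ⟨?_, ?_, ?_⟩
  · have hsum : (∑ ℓ ∈ L,
        {u : V | Relation.ReflTransGen (fun a b : V => par b = some a) u ℓ}.ncard)
        ≤ L.card * (n - (L.card - 1)) := by
      calc _ ≤ ∑ _ℓ ∈ L, (n - (L.card - 1)) := Finset.sum_le_sum hbound
      _ = L.card * (n - (L.card - 1)) := by rw [Finset.sum_const, smul_eq_mul]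
    refine le_trans hsum ?_
    rcases Nat.eq_zero_or_pos L.card with h0 | hpos
    · simp [h0]
    · obtain ⟨j, hj⟩ : ∃ j, L.card = j + 1 := ⟨L.card - 1, by omega⟩
      rw [hj]
      simp only [Nat.add_sub_cancel]
      have hjn : j ≤ n := by omega
      have := amgm_aux (j + 1) (n - j)
      have he : (j + 1) + (n - j) = n + 1 := by omega
      rw [he] at this
      have he2 : n + 1 + 1 = n + 2 := rfl
      rw [he2] at this
      exact this
  · intro k hk ℓ hℓ
    have := hbound ℓ ((hmemL ℓ).2 hℓ)
    rw [hk] at this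
    simpa using this
  · intro k hk1 hk2
    have hkn : k ≤ n := by omega
    have := amgm_aux (k + 1) (n - k)
    have he : (k + 1) + (n - k) = n + 1 := by omega
    rw [he] at this
    exact this
end

section
/- The polynomial q(y) = (y₁y₄ − y₂²)(y₁y₅ − y₃²) on ℝ⁵ is hyperbolic along e = (1,0,0,1,1), and its hyperbolicity cone Λ₊(q,e) equals the Vinberg cone {y ∈ ℝ⁵ : y₁ ≥ 0, y₄ ≥ 0, y₅ ≥ 0, y₁y₄ ≥ y₂², y₁y₅ ≥ y₃²}. -/
open Polynomial in
lemma quad_factor (a b c : ℝ) :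
    ((C a - X) * (C b - X) - C c ^ 2 : ℝ[X]) =
      (C ((a+b+Real.sqrt ((a-b)^2+4*c^2))/2) - X) *
        (C ((a+b-Real.sqrt ((a-b)^2+4*c^2))/2) - X) := by
  have hD : Real.sqrt ((a-b)^2+4*c^2) * Real.sqrt ((a-b)^2+4*c^2) = (a-b)^2+4*c^2 :=
    Real.mul_self_sqrt (by positivity)
  set d := Real.sqrt ((a-b)^2+4*c^2) with hd
  have h1 : (a+b+d)/2 + (a+b-d)/2 = a + b := by ring
  have h2 : ((a+b+d)/2) * ((a+b-d)/2) = a*b - c^2 := by linear_combination (-1/4 : ℝ) * hD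
  have e1 : (C ((a+b+d)/2) - X) * (C ((a+b-d)/2) - X) =
      X^2 - C ((a+b+d)/2 + (a+b-d)/2) * X + C (((a+b+d)/2) * ((a+b-d)/2)) := by
    simp only [C_add, C_mul]; ring
  rw [e1, h1, h2]
  simp only [C_add, C_sub, C_mul, C_pow]
  ring

open Polynomial in
lemma lineNeg_eq (x : Fin 5 → ℝ) :
    lineNeg ((MvPolynomial.X 0 * MvPolynomial.X 3 - (MvPolynomial.X 1) ^ 2) *
        (MvPolynomial.X 0 * MvPolynomial.X 4 - (MvPolynomial.X 2) ^ 2) :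
        MvPolynomial (Fin 5) ℝ) x ![1, 0, 0, 1, 1] =
      ((C (x 0) - X) * (C (x 3) - X) - C (x 1) ^ 2) *
        ((C (x 0) - X) * (C (x 4) - X) - C (x 2) ^ 2) := by
  simp only [lineNeg, MvPolynomial.eval₂_mul, MvPolynomial.eval₂_sub, MvPolynomial.eval₂_pow,
    MvPolynomial.eval₂_X, Matrix.cons_val_zero, Matrix.cons_val_one, Matrix.head_cons,
    Matrix.cons_val_two, Matrix.tail_cons, Matrix.cons_val_three, Matrix.cons_val_four,
    Matrix.cons_val_fin_one, Polynomial.C_1, Polynomial.C_0]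
  ring

open Polynomial in
lemma linePos_eq (x : Fin 5 → ℝ) :
    linePos ((MvPolynomial.X 0 * MvPolynomial.X 3 - (MvPolynomial.X 1) ^ 2) *
        (MvPolynomial.X 0 * MvPolynomial.X 4 - (MvPolynomial.X 2) ^ 2) :
        MvPolynomial (Fin 5) ℝ) x ![1, 0, 0, 1, 1] =
      ((C (x 0) - X) * (C (x 3) - X) - C (x 1) ^ 2) *
        ((C (x 0) - X) * (C (x 4) - X) - C (x 2) ^ 2) := by
  simp only [linePos, MvPolynomial.eval₂_mul, MvPolynomial.eval₂_sub, MvPolynomial.eval₂_pow,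
    MvPolynomial.eval₂_X, Matrix.cons_val_zero, Matrix.cons_val_one, Matrix.head_cons,
    Matrix.cons_val_two, Matrix.tail_cons, Matrix.cons_val_three, Matrix.cons_val_four,
    Matrix.cons_val_fin_one, Polynomial.C_1, Polynomial.C_0]
  ring

open Polynomial in
lemma prod_form (r1 r2 r3 r4 : ℝ) :
    ((C r1 - X) * (C r2 - X)) * ((C r3 - X) * (C r4 - X)) =
      (({r1, r2, r3, r4} : Multiset ℝ).map (fun a => X - C a)).prod := by
  simp only [Multiset.insert_eq_cons, Multiset.map_cons, Multiset.prod_cons,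
    Multiset.map_singleton, Multiset.prod_singleton]
  ring

lemma quad_roots_nonneg (a b c : ℝ) :
    (0 ≤ (a+b+Real.sqrt ((a-b)^2+4*c^2))/2 ∧ 0 ≤ (a+b-Real.sqrt ((a-b)^2+4*c^2))/2) ↔
      (0 ≤ a ∧ 0 ≤ b ∧ c^2 ≤ a*b) := by
  have hD : (0:ℝ) ≤ (a-b)^2+4*c^2 := by positivity
  have hs := Real.sqrt_nonneg ((a-b)^2+4*c^2)
  have hsq := Real.sq_sqrt hD
  constructor
  · rintro ⟨h1, h2⟩
    have hs1 : Real.sqrt ((a-b)^2+4*c^2) ≤ a + b := by linarith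
    have habs : |a - b| ≤ Real.sqrt ((a-b)^2+4*c^2) := by
      rw [← Real.sqrt_sq_eq_abs]
      exact Real.sqrt_le_sqrt (by nlinarith)
    have h3 : c^2 ≤ a*b := by nlinarith [hsq, hs1, hs]
    have hle := le_abs_self (a - b)
    have hge := neg_abs_le (a - b)
    exact ⟨by linarith, by linarith, h3⟩
  · rintro ⟨ha, hb, hc⟩
    have h4 : Real.sqrt ((a-b)^2+4*c^2) ≤ a + b := by
      rw [show a + b = Real.sqrt ((a+b)^2) from (Real.sqrt_sq (by linarith)).symm]
      exact Real.sqrt_le_sqrt (by nlinarith)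
    constructor <;> linarith

open MvPolynomial in
/-- The minimal polynomial of the Vinberg cone is hyperbolic along `e = (1,0,0,1,1)` and its
hyperbolicity cone is the Vinberg cone. -/
theorem stmt_16 :
    IsHyperbolicAlong ((X 0 * X 3 - (X 1) ^ 2) * (X 0 * X 4 - (X 2) ^ 2) :
        MvPolynomial (Fin 5) ℝ) ![1, 0, 0, 1, 1] ∧
    hypCone ((X 0 * X 3 - (X 1) ^ 2) * (X 0 * X 4 - (X 2) ^ 2) :
        MvPolynomial (Fin 5) ℝ) ![1, 0, 0, 1, 1]
      = {y : Fin 5 → ℝ | 0 ≤ y 0 ∧ 0 ≤ y 3 ∧ 0 ≤ y 4 ∧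
          (y 1) ^ 2 ≤ y 0 * y 3 ∧ (y 2) ^ 2 ≤ y 0 * y 4} := by
  constructor
  · constructor
    · simp [MvPolynomial.eval_mul, MvPolynomial.eval_sub, MvPolynomial.eval_pow,
        MvPolynomial.eval_X]
    · intro x
      rw [lineNeg_eq, quad_factor (x 0) (x 3) (x 1), quad_factor (x 0) (x 4) (x 2), prod_form,
        Polynomial.roots_multiset_prod_X_sub_C,
        Polynomial.natDegree_multiset_prod_X_sub_C_eq_card]
  · ext y
    simp only [hypCone, Set.mem_setOf_eq, linePos_eq, quad_factor, prod_form,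
      Polynomial.roots_multiset_prod_X_sub_C, Multiset.insert_eq_cons, Multiset.mem_cons,
      Multiset.mem_singleton]
    constructor
    · intro h
      have A := (quad_roots_nonneg (y 0) (y 3) (y 1)).mp
        ⟨h _ (Or.inl rfl), h _ (Or.inr (Or.inl rfl))⟩
      have B := (quad_roots_nonneg (y 0) (y 4) (y 2)).mp
        ⟨h _ (Or.inr (Or.inr (Or.inl rfl))), h _ (Or.inr (Or.inr (Or.inr rfl)))⟩
      exact ⟨A.1, A.2.1, B.2.1, A.2.2, B.2.2⟩
    · rintro ⟨h0, h3, h4, h13, h14⟩ t ht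
      have A := (quad_roots_nonneg (y 0) (y 3) (y 1)).mpr ⟨h0, h3, h13⟩
      have B := (quad_roots_nonneg (y 0) (y 4) (y 2)).mpr ⟨h0, h4, h14⟩
      rcases ht with rfl | rfl | rfl | rfl
      · exact A.1
      · exact A.2
      · exact B.1
      · exact B.2
end

section
/- Suppose D₁, …, D_n : ℝ^m → ℝ are polynomials satisfying recurrences of the form D_k = D₁D₂⋯D_{k−1}·p_k − (Σ_{i<k−1} D_{i+1}⋯D_{k−1}·q_{ki}²) − q_{k,k−1}² for polynomials p_k, q_{ki}. If x ∈ ℝ^m satisfies D_i(x) ≥ 0 for all i and D_k(x) = 0 for some k, then D_j(x) = 0 for all j ≥ k. -/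
/-- If polynomials `D₁,…,D_n` on `ℝ^m` satisfy the recurrences
`D_k = D₁⋯D_{k-1}·p_k − (Σ_{1 ≤ i < k-1} D_{i+1}⋯D_{k-1}·q_{k,i}²) − q_{k,k-1}²`
for `2 ≤ k ≤ n`, and `x` satisfies `D_i(x) ≥ 0` for all `i` and `D_k(x) = 0` for some `k`,
then `D_j(x) = 0` for all `j ≥ k`. -/
theorem stmt_18 {m n : ℕ} (D p : ℕ → MvPolynomial (Fin m) ℝ)
    (q : ℕ → ℕ → MvPolynomial (Fin m) ℝ)
    (hrec : ∀ k : ℕ, 2 ≤ k → k ≤ n →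
      D k = (∏ i ∈ Finset.Ico 1 k, D i) * p k
        - (∑ i ∈ Finset.Ico 1 (k - 1), (∏ j ∈ Finset.Ico (i + 1) k, D j) * (q k i) ^ 2)
        - (q k (k - 1)) ^ 2)
    (x : Fin m → ℝ)
    (hnonneg : ∀ i : ℕ, 1 ≤ i → i ≤ n → 0 ≤ MvPolynomial.eval x (D i))
    (k : ℕ) (hk1 : 1 ≤ k) (hkn : k ≤ n) (hzero : MvPolynomial.eval x (D k) = 0) :
    ∀ j : ℕ, k ≤ j → j ≤ n → MvPolynomial.eval x (D j) = 0 := by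
  intro j hkj
  induction j, hkj using Nat.le_induction with
  | base => intro _; exact hzero
  | succ j hkj ih =>
    intro hjn
    have hjn' : j ≤ n := le_trans (Nat.le_succ j) hjn
    have hDj : MvPolynomial.eval x (D j) = 0 := ih hjn'
    have h1j : 1 ≤ j := le_trans hk1 hkj
    have hev := congrArg (MvPolynomial.eval x) (hrec (j + 1) (by omega) hjn)
    simp only [map_sub, map_mul, map_pow, map_sum, map_prod] at hev
    have hprod : (∏ i ∈ Finset.Ico 1 (j + 1), MvPolynomial.eval x (D i)) = 0 :=
      Finset.prod_eq_zero (Finset.mem_Ico.mpr ⟨h1j, Nat.lt_succ_self j⟩) hDj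
    have hsum : (∑ i ∈ Finset.Ico 1 (j + 1 - 1),
        (∏ l ∈ Finset.Ico (i + 1) (j + 1), MvPolynomial.eval x (D l)) *
          (MvPolynomial.eval x (q (j + 1) i)) ^ 2) = 0 := by
      apply Finset.sum_eq_zero
      intro i hi
      have hi' := Finset.mem_Ico.mp hi
      have : (∏ l ∈ Finset.Ico (i + 1) (j + 1), MvPolynomial.eval x (D l)) = 0 :=
        Finset.prod_eq_zero (Finset.mem_Ico.mpr ⟨by omega, Nat.lt_succ_self j⟩) hDj
      rw [this, zero_mul]
    rw [hprod, hsum, zero_mul, zero_sub] at hev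
    have hge := hnonneg (j + 1) (by omega) hjn
    nlinarith [sq_nonneg (MvPolynomial.eval x (q (j + 1) (j + 1 - 1)))]
end
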